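/- Under the quadratic-constraint assumptions (J ≠ 0, H Hessian with spectral radius ρ, ε^G the geometric minimizer, ε^S the Sampson minimizer, and the condition ‖J‖⁴ ≥ 2|C(z)||JHJᵀ|), the chain of inequalities (1/2)‖ε^G‖ ≤ ‖ε^S‖ ≤ ‖ε^G‖ + (ρ/(2‖J‖))‖ε^G‖² holds. -/

import Mathlib

/-!
Evaluating `C (z + ε) = C z + J ⬝ ε + ½ εᵀHε` at `ε^G` and using Cauchy–Schwarz together with
`|εᵀHε| ≤ ρ ‖ε‖²` gives `|C z| ≤ ‖J‖ ‖ε^G‖ + (ρ/2) ‖ε^G‖²`, which is the upper bound because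
`‖ε^S‖ = |C z| / ‖J‖`. On the gradient line `z + t J` the constraint is the scalar quadratic
`C z + ‖J‖² t + (JᵀHJ/2) t² = 0`, whose discriminant is nonnegative by the hypothesis on `‖J‖⁴`;
its smaller root has `|t| ≤ 2 |C z| / ‖J‖²`, so minimality of `ε^G` gives
`‖ε^G‖ ≤ |t| ‖J‖ ≤ 2 ‖ε^S‖`.
-/

open Matrix

/-- The Euclidean norm of a vector in `ℝⁿ`. -/
noncomputable def euclNorm {n : ℕ} (v : Fin n → ℝ) : ℝ :=
  Real.sqrt (∑ i, v i ^ 2)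

/-- The spectral radius of a real square matrix. -/
noncomputable def specRad {m : ℕ} (A : Matrix (Fin m) (Fin m) ℝ) : ℝ :=
  ⨆ μ ∈ spectrum ℝ A, |μ|

lemma euclNorm_eq_norm {n : ℕ} (v : Fin n → ℝ) :
    euclNorm v = ‖(WithLp.toLp 2 v : EuclideanSpace ℝ (Fin n))‖ := by
  simp [euclNorm, EuclideanSpace.norm_eq]

lemma euclNorm_smul {n : ℕ} (c : ℝ) (v : Fin n → ℝ) :
    euclNorm (c • v) = |c| * euclNorm v := by
  simp [euclNorm_eq_norm, WithLp.toLp_smul, norm_smul]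

lemma euclNorm_pos {n : ℕ} {v : Fin n → ℝ} (hv : v ≠ 0) : 0 < euclNorm v := by
  simpa [euclNorm_eq_norm] using hv

lemma dotProduct_self_eq_euclNorm_sq {n : ℕ} (v : Fin n → ℝ) : v ⬝ᵥ v = euclNorm v ^ 2 := by
  rw [euclNorm_eq_norm, ← real_inner_self_eq_norm_sq, EuclideanSpace.inner_eq_star_dotProduct]
  simp

lemma abs_dotProduct_le {n : ℕ} (v w : Fin n → ℝ) :
    |v ⬝ᵥ w| ≤ euclNorm v * euclNorm w := by
  simpa [euclNorm_eq_norm, EuclideanSpace.inner_eq_star_dotProduct, dotProduct_comm] using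
    abs_real_inner_le_norm (WithLp.toLp 2 v : EuclideanSpace ℝ (Fin n)) (WithLp.toLp 2 w)

lemma abs_le_specRad {m : ℕ} (A : Matrix (Fin m) (Fin m) ℝ) {μ : ℝ}
    (hμ : μ ∈ spectrum ℝ A) : |μ| ≤ specRad A := by
  obtain ⟨M, hM⟩ := (A.finite_spectrum.image abs).bddAbove
  have hbdd : BddAbove (Set.range fun ν : ℝ => ⨆ _ : ν ∈ spectrum ℝ A, |ν|) :=
    ⟨max M 0, Set.forall_mem_range.2 fun ν =>
      Real.iSup_le (fun hν => (hM ⟨ν, hν, rfl⟩).trans (le_max_left _ _)) (le_max_right _ _)⟩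
  have := le_ciSup hbdd μ
  rwa [ciSup_pos hμ] at this

section Eigen

variable {ι : Type*} [Fintype ι]

lemma vecMul_eq_star_mulVec (U : Matrix ι ι ℝ) (x : ι → ℝ) : x ᵥ* U = star U *ᵥ x := by
  rw [star_eq_conjTranspose, conjTranspose_eq_transpose_of_trivial, mulVec_transpose]

lemma star_mulVec_dotProduct_self [DecidableEq ι] (U : unitaryGroup ι ℝ) (x : ι → ℝ) :
    (star (U : Matrix ι ι ℝ) *ᵥ x) ⬝ᵥ (star (U : Matrix ι ι ℝ) *ᵥ x) = x ⬝ᵥ x := by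
  nth_rewrite 1 [← vecMul_eq_star_mulVec]
  rw [← dotProduct_mulVec, mulVec_mulVec, (mem_unitaryGroup_iff).mp U.2, one_mulVec]

lemma dotProduct_mulVec_eq_sum_eigenvalues [DecidableEq ι] {A : Matrix ι ι ℝ} (hA : A.IsHermitian)
    (x : ι → ℝ) :
    x ⬝ᵥ A *ᵥ x =
      ∑ i, hA.eigenvalues i * (star (hA.eigenvectorUnitary : Matrix ι ι ℝ) *ᵥ x) i ^ 2 := by
  conv_lhs => rw [hA.spectral_theorem]
  rw [Unitary.conjStarAlgAut_apply, ← mulVec_mulVec, ← mulVec_mulVec, dotProduct_mulVec,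
    vecMul_eq_star_mulVec]
  simp only [mulVec_diagonal, dotProduct, Function.comp_apply, RCLike.ofReal_real_eq_id, id]
  exact Finset.sum_congr rfl fun i _ => by ring

end Eigen

lemma abs_dotProduct_mulVec_le_specRad {m : ℕ} {A : Matrix (Fin m) (Fin m) ℝ} (hA : A.IsSymm)
    (x : Fin m → ℝ) : |x ⬝ᵥ A *ᵥ x| ≤ specRad A * euclNorm x ^ 2 := by
  have hA' : A.IsHermitian := by rwa [IsHermitian, conjTranspose_eq_transpose_of_trivial]
  set y := star (hA'.eigenvectorUnitary : Matrix (Fin m) (Fin m) ℝ) *ᵥ x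
  have hy : ∑ i, y i ^ 2 = euclNorm x ^ 2 := by
    rw [← dotProduct_self_eq_euclNorm_sq, ← star_mulVec_dotProduct_self hA'.eigenvectorUnitary x]
    simp only [dotProduct, sq, y]
  calc |x ⬝ᵥ A *ᵥ x| = |∑ i, hA'.eigenvalues i * y i ^ 2| := by
        rw [dotProduct_mulVec_eq_sum_eigenvalues hA']
    _ ≤ ∑ i, |hA'.eigenvalues i| * y i ^ 2 := by
        refine (Finset.abs_sum_le_sum_abs _ _).trans_eq (Finset.sum_congr rfl fun i _ => ?_)
        rw [abs_mul, abs_of_nonneg (sq_nonneg (y i))]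
    _ ≤ ∑ i, specRad A * y i ^ 2 := by
        gcongr with i
        exact abs_le_specRad A (hA'.eigenvalues_mem_spectrum_real i)
    _ = specRad A * euclNorm x ^ 2 := by rw [← Finset.mul_sum, hy]

lemma exists_quadratic_root_abs_le {a b c : ℝ} (hb : 0 < b) (hdisc : 2 * a * c ≤ b ^ 2) :
    ∃ t, c + b * t + a / 2 * t ^ 2 = 0 ∧ |t| ≤ 2 * |c| / b := by
  set s := Real.sqrt (b ^ 2 - 2 * a * c)
  have hs : s ^ 2 = b ^ 2 - 2 * a * c := Real.sq_sqrt (by linarith)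
  have hbs : b ≤ b + s := le_add_of_nonneg_right (Real.sqrt_nonneg _)
  have hbs0 : 0 < b + s := hb.trans_le hbs
  -- the root `(s - b) / a` in rationalised form, which stays valid when `a = 0`
  refine ⟨-2 * c / (b + s), ?_, ?_⟩
  · field_simp
    linear_combination c * hs
  · rw [abs_div, abs_mul, abs_neg, abs_two, abs_of_pos hbs0]
    gcongr

section QuadraticConstraint

variable {n : ℕ} {c : ℝ} {J : Fin n → ℝ} {H : Matrix (Fin n) (Fin n) ℝ}

lemma abs_le_of_quadratic_eq_zero (hH : H.IsSymm) {ε : Fin n → ℝ}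
    (hε : c + J ⬝ᵥ ε + 1 / 2 * (ε ⬝ᵥ H *ᵥ ε) = 0) :
    |c| ≤ euclNorm J * euclNorm ε + specRad H / 2 * euclNorm ε ^ 2 := by
  have hc : c = -(J ⬝ᵥ ε) - 1 / 2 * (ε ⬝ᵥ H *ᵥ ε) := by linarith
  have hlin := abs_dotProduct_le J ε
  have hquad := abs_dotProduct_mulVec_le_specRad hH ε
  calc |c| ≤ |J ⬝ᵥ ε| + 1 / 2 * |ε ⬝ᵥ H *ᵥ ε| := by
        rw [hc]
        refine (abs_sub _ _).trans ?_
        rw [abs_neg, abs_mul, abs_of_pos (by norm_num : (0 : ℝ) < 1 / 2)]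
    _ ≤ euclNorm J * euclNorm ε + specRad H / 2 * euclNorm ε ^ 2 := by linarith

lemma exists_smul_quadratic_eq_zero (hJ : J ≠ 0)
    (hdisc : 2 * |c| * |J ⬝ᵥ H *ᵥ J| ≤ euclNorm J ^ 4) :
    ∃ t : ℝ, c + J ⬝ᵥ (t • J) + 1 / 2 * ((t • J) ⬝ᵥ H *ᵥ (t • J)) = 0 ∧
      euclNorm (t • J) ≤ 2 * (|c| / euclNorm J) := by
  have hL := euclNorm_pos hJ
  have hdisc' : 2 * (J ⬝ᵥ H *ᵥ J) * c ≤ (euclNorm J ^ 2) ^ 2 := by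
    have := le_abs_self (2 * (J ⬝ᵥ H *ᵥ J) * c)
    rw [abs_mul, abs_mul, abs_two] at this
    nlinarith
  obtain ⟨t, ht, htc⟩ := exists_quadratic_root_abs_le (pow_pos hL 2) hdisc'
  refine ⟨t, ?_, ?_⟩
  · simp only [dotProduct_smul, smul_dotProduct, mulVec_smul, dotProduct_self_eq_euclNorm_sq,
      smul_eq_mul]
    linear_combination ht
  · rw [euclNorm_smul]
    calc |t| * euclNorm J ≤ 2 * |c| / euclNorm J ^ 2 * euclNorm J := by gcongr
      _ = 2 * (|c| / euclNorm J) := by field_simp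

end QuadraticConstraint

/-- Under the quadratic-constraint assumptions (`J ≠ 0`, Hessian `H` with spectral
radius `ρ`, geometric minimizer `ε^G`, Sampson minimizer `ε^S = −(C z/‖J‖²) • J`,
and the condition `‖J‖⁴ ≥ 2 |C z| |J H Jᵀ|`), the chain of inequalities
`(1/2) ‖ε^G‖ ≤ ‖ε^S‖ ≤ ‖ε^G‖ + (ρ/(2‖J‖)) ‖ε^G‖²` holds. -/
theorem stmt15 {n : ℕ} (C : (Fin n → ℝ) → ℝ) (z J : Fin n → ℝ)
    (H : Matrix (Fin n) (Fin n) ℝ) (hH : H.IsSymm)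
    (ρ : ℝ) (hρ : ρ = specRad H)
    (hTaylor : ∀ ε, C (z + ε) = C z + J ⬝ᵥ ε + (1 / 2) * (ε ⬝ᵥ H.mulVec ε))
    (hJ0 : J ≠ 0)
    (hcond : euclNorm J ^ 4 ≥ 2 * |C z| * |J ⬝ᵥ H.mulVec J|)
    (εG : Fin n → ℝ) (hG : C (z + εG) = 0)
    (hGmin : ∀ ε, C (z + ε) = 0 → euclNorm εG ≤ euclNorm ε)
    (εS : Fin n → ℝ) (hS : εS = (-(C z / euclNorm J ^ 2)) • J) :
    (1 / 2) * euclNorm εG ≤ euclNorm εS ∧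
    euclNorm εS ≤ euclNorm εG + ρ / (2 * euclNorm J) * euclNorm εG ^ 2 := by
  have hL := euclNorm_pos hJ0
  have hεS : euclNorm εS = |C z| / euclNorm J := by
    rw [hS, euclNorm_smul, abs_neg, abs_div, abs_of_pos (pow_pos hL 2)]
    field_simp
  obtain ⟨t, ht, htJ⟩ := exists_smul_quadratic_eq_zero hJ0 hcond
  have hGt : euclNorm εG ≤ euclNorm (t • J) := hGmin _ (by rw [hTaylor]; exact ht)
  have hCz := abs_le_of_quadratic_eq_zero hH (by rw [← hTaylor, hG])
  refine ⟨by linarith, ?_⟩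
  rw [hεS, hρ, div_le_iff₀ hL]
  calc |C z| ≤ euclNorm J * euclNorm εG + specRad H / 2 * euclNorm εG ^ 2 := hCz
    _ = (euclNorm εG + specRad H / (2 * euclNorm J) * euclNorm εG ^ 2) * euclNorm J := by
      field_simp
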